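/- Let α ≥ 0. Then U(α) ⊆ H(α) (after restricting functions in U(α) to (0,1]); that is, every α-Lipschitz function φ : [0,1] → [0,α] satisfying (S): φ(λθ) ≥ φ(θ) + θφ(λ) for all λ,θ ∈ (0,1] also satisfies (W): φ(λθ) ≤ (1−θ)α + θφ(λ) for all λ,θ ∈ (0,1]. Moreover, if α > 0 the inclusion U(α) ⊆ H(α) is strict. -/
import Mathlib


open Metric Set Filter
open scoped ENNReal NNReal

noncomputable section

/-- Least number of closed balls of radius `r` needed to cover `E`. -/
def coveringNumber {X : Type*} [MetricSpace X] (r : ℝ) (E : Set X) : ℕ∞ :=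
  sInf {n : ℕ∞ | ∃ s : Finset X, (s.card : ℕ∞) = n ∧ E ⊆ ⋃ x ∈ s, Metric.closedBall x r}

/-- Packing number: the largest cardinality of a subset of `E` whose closed `2r`-balls are
pairwise disjoint. -/
def packingNumber {X : Type*} [MetricSpace X] (r : ℝ) (E : Set X) : ℕ∞ :=
  sSup {n : ℕ∞ | ∃ s : Finset X, (s.card : ℕ∞) = n ∧ ↑s ⊆ E ∧
    (s : Set X).Pairwise fun x y =>
      Disjoint (Metric.closedBall x (2 * r)) (Metric.closedBall y (2 * r))}

/-- Base-2 logarithm `ℕ∞ → ℝ≥0∞`, clamped below at `0`. -/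
def elog2 (n : ℕ∞) : ℝ≥0∞ :=
  if n = ⊤ then ⊤ else ENNReal.ofReal (Real.logb 2 (n.toNat : ℝ))

/-- The infimal two-scale branching function `β_X(u,v) = log₂ inf_x P_{2^{-u}}(B(x,2^{-v}))`. -/
def brL (X : Type*) [MetricSpace X] (u v : ℝ) : ℝ≥0∞ :=
  elog2 (⨅ x : X, packingNumber ((2 : ℝ) ^ (-u)) (Metric.closedBall x ((2 : ℝ) ^ (-v))))

/-- The supremal two-scale branching function `ν_X(u,v) = log₂ sup_x N_{2^{-u}}(B(x,2^{-v}))`. -/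
def brU (X : Type*) [MetricSpace X] (u v : ℝ) : ℝ≥0∞ :=
  elog2 (⨆ x : X, coveringNumber ((2 : ℝ) ^ (-u)) (Metric.closedBall x ((2 : ℝ) ^ (-v))))

/-- The lower spectrum `dim_L^θ X`, valued in `[0,∞]`. -/
def lowerSpectrum (X : Type*) [MetricSpace X] (θ : ℝ) : ℝ≥0∞ :=
  ⨆ s ∈ {s : ℝ | 0 ≤ s ∧ ∃ C : ℝ, 0 < C ∧ ∀ r : ℝ, 0 < r → r < 1 → ∀ x : X,
      ENNReal.ofReal (C * (r ^ (θ - 1)) ^ s) ≤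
        (coveringNumber r (Metric.closedBall x (r ^ θ)) : ℝ≥0∞)},
    ENNReal.ofReal s

/-- The monotone (quasi-) lower spectrum. -/
def monoLowerSpectrum (X : Type*) [MetricSpace X] (θ : ℝ) : ℝ≥0∞ :=
  ⨆ s ∈ {s : ℝ | 0 ≤ s ∧ ∃ C : ℝ, 0 < C ∧ ∀ r R : ℝ, 0 < r → r ≤ r ^ θ → r ^ θ ≤ R → R < 1 →
      ∀ x : X, ENNReal.ofReal (C * (R / r) ^ s) ≤
        (coveringNumber r (Metric.closedBall x R) : ℝ≥0∞)},
    ENNReal.ofReal s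

/-- The class `L(α)`: functions on `Δ = {v ≤ u}` that are nonnegative, vanish on the diagonal,
are superadditive, and are `α`-Lipschitz in the first variable. -/
def MemL (α : ℝ) (f : ℝ → ℝ → ℝ) : Prop :=
  (∀ u v : ℝ, v ≤ u → 0 ≤ f u v) ∧
  (∀ u : ℝ, f u u = 0) ∧
  (∀ u w v : ℝ, v ≤ w → w ≤ u → f u w + f w v ≤ f u v) ∧
  (∀ v u₁ u₂ : ℝ, v ≤ u₁ → v ≤ u₂ → |f u₁ v - f u₂ v| ≤ α * |u₁ - u₂|)

/-- The class `H(α)`: functions `(0,1] → [0,α]` satisfying (S) and (W). -/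
def MemH (α : ℝ) (φ : ℝ → ℝ) : Prop :=
  (∀ θ : ℝ, 0 < θ → θ ≤ 1 → 0 ≤ φ θ ∧ φ θ ≤ α) ∧
  (∀ lam θ : ℝ, 0 < lam → lam ≤ 1 → 0 < θ → θ ≤ 1 → φ θ + θ * φ lam ≤ φ (lam * θ)) ∧
  (∀ lam θ : ℝ, 0 < lam → lam ≤ 1 → 0 < θ → θ ≤ 1 → φ (lam * θ) ≤ (1 - θ) * α + θ * φ lam)

/-- The class `M(α)`: functions `(0,1] → [0,α]` satisfying (W) and (M). -/
def MemM (α : ℝ) (φ : ℝ → ℝ) : Prop :=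
  (∀ θ : ℝ, 0 < θ → θ ≤ 1 → 0 ≤ φ θ ∧ φ θ ≤ α) ∧
  (∀ lam θ : ℝ, 0 < lam → lam ≤ 1 → 0 < θ → θ ≤ 1 → φ (lam * θ) ≤ (1 - θ) * α + θ * φ lam) ∧
  (∀ θ₁ θ₂ : ℝ, 0 < θ₁ → θ₁ ≤ θ₂ → θ₂ < 1 → φ θ₂ / (1 - θ₂) ≤ φ θ₁ / (1 - θ₁))

/-- The normalized limit `Λ(f)(θ) = liminf_{u→∞} f(u, θu)/u` for real-valued `f`. -/
def Lam (f : ℝ → ℝ → ℝ) (θ : ℝ) : ℝ :=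
  Filter.liminf (fun u => f u (θ * u) / u) Filter.atTop

/-- The normalized limit `Λ(g)(θ) = liminf_{u→∞} g(u, θu)/u` for `[0,∞]`-valued `g`. -/
def LamE (g : ℝ → ℝ → ENNReal) (θ : ℝ) : ℝ≥0∞ :=
  Filter.liminf (fun u => g u (θ * u) / ENNReal.ofReal u) Filter.atTop

/-- The two-piece affine function `φ_{α,λ,t}` through `(0,α)`, `(λ,t)` and `(1,0)`. -/
def phiFun (α lam t : ℝ) : ℝ → ℝ := fun θ =>
  if θ ≤ lam then α + (θ / lam) * (t - α) else t * (1 - θ) / (1 - lam)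

/-- The maximal element `h_{g,z}` of `L(α)` agreeing with `g` on the strip `{(u,z) : u ≥ z}`. -/
def hFun (α : ℝ) (g : ℝ → ℝ) (z : ℝ) : ℝ → ℝ → ℝ := fun u v =>
  if z ≤ v then g u - g v else α * (u - v)

/-- A metric space is `η`-uniform if `η(u)/u → 0` and `ν_X ≤ β_X + η(u)` on `Δ`. -/
def IsEtaUniform (η : ℝ → ℝ) (X : Type*) [MetricSpace X] : Prop :=
  Filter.Tendsto (fun u => η u / u) Filter.atTop (nhds 0) ∧
  ∀ u v : ℝ, v ≤ u → brU X u v ≤ brL X u v + ENNReal.ofReal (η u)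

/-- A metric space is uniform if it is `η`-uniform for some `η`. -/
def IsUniform (X : Type*) [MetricSpace X] : Prop := ∃ η : ℝ → ℝ, IsEtaUniform η X

/-- The relation `f ≍ g` between a real-valued and an `[0,∞]`-valued function on `Δ`. -/
def AsympRE (f : ℝ → ℝ → ℝ) (g : ℝ → ℝ → ENNReal) : Prop :=
  ∃ η : ℝ → ℝ, (∀ u : ℝ, 0 ≤ η u) ∧
    Filter.Tendsto (fun u => η u / u) Filter.atTop (nhds 0) ∧
    ∀ u v : ℝ, 0 ≤ v → v ≤ u →
      (v ≤ u - η u → ENNReal.ofReal (f u (v + η u) - η u) ≤ g u v) ∧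
      (η u ≤ v → g u v ≤ ENNReal.ofReal (f u (v - η u) + η u))

/-- `U(α) ⊆ H(α)`, and the inclusion is strict for `α > 0`. -/
theorem MemU_subset_MemH_strict (α : ℝ) (hα : 0 ≤ α) :
    (∀ φ : ℝ → ℝ, (∀ θ : ℝ, 0 ≤ θ → θ ≤ 1 → 0 ≤ φ θ ∧ φ θ ≤ α) →
      (∀ θ₁ θ₂ : ℝ, 0 ≤ θ₁ → θ₁ ≤ 1 → 0 ≤ θ₂ → θ₂ ≤ 1 →
        |φ θ₁ - φ θ₂| ≤ α * |θ₁ - θ₂|) →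
      (∀ lam θ : ℝ, 0 < lam → lam ≤ 1 → 0 < θ → θ ≤ 1 →
        φ θ + θ * φ lam ≤ φ (lam * θ)) →
      ∀ lam θ : ℝ, 0 < lam → lam ≤ 1 → 0 < θ → θ ≤ 1 →
        φ (lam * θ) ≤ (1 - θ) * α + θ * φ lam) ∧
    (0 < α → ∃ φ : ℝ → ℝ, MemH α φ ∧
      ∀ ψ : ℝ → ℝ, (∀ θ : ℝ, 0 ≤ θ → θ ≤ 1 → 0 ≤ ψ θ ∧ ψ θ ≤ α) →
        (∀ θ₁ θ₂ : ℝ, 0 ≤ θ₁ → θ₁ ≤ 1 → 0 ≤ θ₂ → θ₂ ≤ 1 →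
          |ψ θ₁ - ψ θ₂| ≤ α * |θ₁ - θ₂|) →
        (∀ lam θ : ℝ, 0 < lam → lam ≤ 1 → 0 < θ → θ ≤ 1 →
          ψ θ + θ * ψ lam ≤ ψ (lam * θ)) →
        ∃ θ : ℝ, 0 < θ ∧ θ ≤ 1 ∧ ψ θ ≠ φ θ) := by
  constructor
  · intro φ hrange hlip hS lam θ hl0 hl1 ht0 ht1
    have h1 : φ 1 = 0 := by
      have h2 := hS 1 1 one_pos le_rfl one_pos le_rfl
      norm_num at h2
      have h0 := (hrange 1 zero_le_one le_rfl).1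
      linarith
    have hφl : φ lam ≤ α * (1 - lam) := by
      have := hlip lam 1 hl0.le hl1 zero_le_one le_rfl
      rw [h1] at this
      have habs : |lam - 1| = 1 - lam := by rw [abs_of_nonpos (by linarith)]; ring
      rw [habs] at this
      have := (abs_le.mp this).2
      linarith
    have hlt : φ (lam * θ) - φ lam ≤ α * (lam * (1 - θ)) := by
      have h01 : 0 ≤ lam * θ := by positivity
      have h02 : lam * θ ≤ 1 := by nlinarith
      have := hlip (lam * θ) lam h01 h02 hl0.le hl1
      have habs : |lam * θ - lam| = lam * (1 - θ) := by
        rw [abs_of_nonpos (by nlinarith)]; ring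
      rw [habs] at this
      have := (abs_le.mp this).2
      linarith
    nlinarith
  · intro hαpos
    refine ⟨fun θ => α * max (1 - 2 * θ) 0, ⟨?_, ?_, ?_⟩, ?_⟩
    · intro θ ht0 ht1
      constructor
      · positivity
      · rcases le_total (1 - 2 * θ) 0 with h | h <;>
          simp only [max_eq_right, max_eq_left, h] <;> nlinarith
    · intro lam θ hl0 hl1 ht0 ht1
      rcases le_total (1 - 2 * lam) 0 with hl | hl <;>
        rcases le_total (1 - 2 * θ) 0 with ht | ht <;>
          rcases le_total (1 - 2 * (lam * θ)) 0 with hlt | hlt <;>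
            simp only [max_eq_right, max_eq_left, hl, ht, hlt] <;>
              nlinarith [mul_nonneg (mul_nonneg hα ht0.le) (sub_nonneg.2 hl1),
                mul_nonneg (mul_nonneg hα hl0.le) (sub_nonneg.2 ht1),
                mul_nonneg hα ht0.le, mul_nonneg hα hl0.le,
                mul_nonneg (mul_nonneg hα hl0.le) ht0.le]
    · intro lam θ hl0 hl1 ht0 ht1
      rcases le_total (1 - 2 * lam) 0 with hl | hl <;>
        rcases le_total (1 - 2 * (lam * θ)) 0 with hlt | hlt <;>
          simp only [max_eq_right, max_eq_left, hl, hlt] <;>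
            nlinarith [mul_nonneg (mul_nonneg hα ht0.le) (sub_nonneg.2 hl1),
              mul_nonneg hα (sub_nonneg.2 ht1), mul_nonneg hα ht0.le,
              mul_nonneg (mul_nonneg hα ht0.le) (sub_nonneg.2 hl1),
              mul_nonneg (mul_nonneg hα hl0.le) (sub_nonneg.2 ht1)]
    · intro ψ hrange hlip hS
      by_contra h
      push_neg at h
      have e1 : ψ (1/4) = α * (1/2) := by
        have := h (1/4) (by norm_num) (by norm_num)
        rw [this]; norm_num
      have e2 : ψ (1/2) = 0 := by
        have := h (1/2) (by norm_num) (by norm_num)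
        rw [this]; norm_num
      have := hlip (1/4) (1/2) (by norm_num) (by norm_num) (by norm_num) (by norm_num)
      rw [e1, e2] at this
      rw [abs_of_nonneg (by linarith : (0:ℝ) ≤ α * (1/2) - 0), show |(1:ℝ)/4 - 1/2| = 1/4 by norm_num] at this
      nlinarith

end
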